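/- Let (V,w) be a weighted graph, let k < h ≤ |V| be integers, and let H ⊆ V be a set of h vertices such that every vertex of H has weighted degree at least the weighted degree of every vertex of V∖H. Let S ⊆ V with |S| = k and S∖H ≠ ∅. Then there exist vertices i ∈ H∖S and j ∈ S∖H such that δ_w((S∖{j})∪{i}) ≥ (1 − 2/(h−k))·δ_w(S). (Local exchange lemma, Lemma 2.2.) -/

import Mathlib

/-!
Fix `j ∈ S \ H`. Every vertex of `H \ S` lies outside `S`, so the weights from the vertices of
`H \ S` into `S` sum to at most `δ(S)`; as `|H \ S| ≥ h - k`, some `i ∈ H \ S` sends weight at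
most `δ(S)/(h - k)` into `S \ {j}`. Swapping `j` for `i` changes the cut by
`deg i - deg j - 2 w(i, S \ {j}) + 2 w(j, S \ {j})`, and `deg i ≥ deg j` because `i ∈ H`, `j ∉ H`.
-/

open Finset

/-- The cut value of a set `S`: total weight of pairs with exactly one endpoint in `S`. -/
noncomputable def cutVal {V : Type*} [Fintype V] [DecidableEq V]
    (w : V → V → ℝ) (S : Finset V) : ℝ :=
  ∑ u ∈ S, ∑ v ∈ Sᶜ, w u v

/-- The weighted degree of a vertex `v`. -/
noncomputable def wdeg {V : Type*} [Fintype V] [DecidableEq V]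
    (w : V → V → ℝ) (v : V) : ℝ :=
  ∑ u ∈ Finset.univ.erase v, w u v

theorem Finset.exists_card_nsmul_le_sum {ι M : Type*} [AddCommMonoid M] [LinearOrder M]
    [IsOrderedCancelAddMonoid M] {s : Finset ι} (hs : s.Nonempty) (f : ι → M) :
    ∃ i ∈ s, #s • f i ≤ ∑ x ∈ s, f x :=
  exists_le_of_sum_le hs (by rw [← smul_sum, sum_const])

section Cut

variable {V : Type*} [Fintype V] [DecidableEq V] {w : V → V → ℝ}

lemma wdeg_eq_sum_erase (hsymm : ∀ u v, w u v = w v u) (v : V) :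
    wdeg w v = ∑ u ∈ univ.erase v, w v u :=
  sum_congr rfl fun u _ => hsymm u v

lemma cutVal_insert (hsymm : ∀ u v, w u v = w v u) {T : Finset V} {i : V} (hi : i ∉ T) :
    cutVal w (insert i T) = cutVal w T + wdeg w i - 2 * ∑ u ∈ T, w i u := by
  have hiT : i ∈ Tᶜ := mem_compl.mpr hi
  have hcompl : (insert i T)ᶜ = Tᶜ.erase i := by
    ext v; simp
  have hfrom_i : ∑ v ∈ Tᶜ.erase i, w i v = wdeg w i - ∑ v ∈ T, w i v := by
    have hsplit : univ.erase i = T ∪ Tᶜ.erase i := by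
      ext v; by_cases hv : v = i <;> simp_all [em]
    have hdisj : Disjoint T (Tᶜ.erase i) :=
      disjoint_left.mpr fun v hv hv' => mem_compl.mp (mem_of_mem_erase hv') hv
    rw [wdeg_eq_sum_erase hsymm, hsplit, sum_union hdisj]
    ring
  have hfrom_T : ∑ u ∈ T, ∑ v ∈ Tᶜ.erase i, w u v = cutVal w T - ∑ u ∈ T, w i u := by
    rw [cutVal, ← sum_sub_distrib]
    exact sum_congr rfl fun u _ => by rw [sum_erase_eq_sub hiT, hsymm u i]
  rw [cutVal, sum_insert hi, hcompl, hfrom_i, hfrom_T]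
  ring

lemma cutVal_sub_le_cutVal_swap (hsymm : ∀ u v, w u v = w v u) (hnonneg : ∀ u v, 0 ≤ w u v)
    {S : Finset V} {i j : V} (hi : i ∉ S) (hj : j ∈ S) (hdeg : wdeg w j ≤ wdeg w i) :
    cutVal w S - 2 * ∑ u ∈ S.erase j, w i u ≤ cutVal w (insert i (S.erase j)) := by
  have hold := cutVal_insert hsymm (notMem_erase j S)
  rw [insert_erase hj] at hold
  have hnew := cutVal_insert hsymm (T := S.erase j) fun h => hi (mem_of_mem_erase h)
  have hj_nonneg : 0 ≤ ∑ u ∈ S.erase j, w j u := sum_nonneg fun u _ => hnonneg j u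
  linarith

lemma sum_sum_le_cutVal (hsymm : ∀ u v, w u v = w v u) (hnonneg : ∀ u v, 0 ≤ w u v)
    {S X T : Finset V} (hX : Disjoint X S) (hT : T ⊆ S) :
    ∑ x ∈ X, ∑ u ∈ T, w x u ≤ cutVal w S :=
  calc ∑ x ∈ X, ∑ u ∈ T, w x u
      ≤ ∑ x ∈ X, ∑ u ∈ S, w x u :=
        sum_le_sum fun x _ => sum_le_sum_of_subset_of_nonneg hT fun u _ _ => hnonneg x u
    _ ≤ ∑ x ∈ Sᶜ, ∑ u ∈ S, w x u :=
        sum_le_sum_of_subset_of_nonneg (subset_compl_iff_disjoint_right.mpr hX)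
          fun x _ _ => sum_nonneg fun u _ => hnonneg x u
    _ = cutVal w S := by
        rw [cutVal, sum_comm]
        exact sum_congr rfl fun u _ => sum_congr rfl fun v _ => hsymm v u

end Cut

theorem local_exchange {V : Type*} [Fintype V] [DecidableEq V]
    (w : V → V → ℝ) (hsymm : ∀ u v, w u v = w v u) (hnonneg : ∀ u v, 0 ≤ w u v)
    (k h : ℕ) (hkh : k < h)
    (H : Finset V) (hHcard : H.card = h)
    (hdeg : ∀ u ∈ H, ∀ v ∉ H, wdeg w v ≤ wdeg w u)
    (S : Finset V) (hScard : S.card = k) (hSH : (S \ H).Nonempty) :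
    ∃ i ∈ H \ S, ∃ j ∈ S \ H,
      (1 - 2 / ((h : ℝ) - (k : ℝ))) * cutVal w S ≤ cutVal w (insert i (S.erase j)) := by
  obtain ⟨j, hj⟩ := hSH
  obtain ⟨hjS, hjH⟩ := mem_sdiff.mp hj
  have hcard : (h : ℝ) - k ≤ #(H \ S) := by
    have := le_card_sdiff S H
    rw [sub_le_iff_le_add]; norm_cast; omega
  have hpos : (0 : ℝ) < h - k := sub_pos.mpr (Nat.cast_lt.mpr hkh)
  have hne : (H \ S).Nonempty := card_pos.mp (mod_cast hpos.trans_le hcard)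
  obtain ⟨i, hi, hi_avg⟩ := exists_card_nsmul_le_sum hne fun x => ∑ u ∈ S.erase j, w x u
  rw [nsmul_eq_mul] at hi_avg
  obtain ⟨hiH, hiS⟩ := mem_sdiff.mp hi
  set A := ∑ u ∈ S.erase j, w i u
  have hA : ((h : ℝ) - k) * A ≤ cutVal w S :=
    (mul_le_mul_of_nonneg_right hcard (sum_nonneg fun u _ => hnonneg i u)).trans
      (hi_avg.trans (sum_sum_le_cutVal hsymm hnonneg sdiff_disjoint (erase_subset j S)))
  refine ⟨i, hi, j, hj, le_trans ?_
    (cutVal_sub_le_cutVal_swap hsymm hnonneg hiS hjS (hdeg i hiH j hjH))⟩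
  have h2A : 2 * A ≤ 2 / ((h : ℝ) - k) * cutVal w S := by
    rw [div_mul_eq_mul_div, le_div_iff₀ hpos]; linarith
  linarith
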